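/- Let S be an isotropic (Abelian) additive subgroup of (ℤ/2)^{2n} with weight distribution {A_w}, and define its shadow Sh(S) = {E ∈ (ℤ/2)^{2n} : ⟨E,g⟩ ≡ wt(g) (mod 2) for all g ∈ S}. Then for every 0 ≤ w ≤ n, the number of weight-w elements of Sh(S) equals (1/|S|) Σ_{w'=0}^{n} (-1)^{w'} A_{w'} K_w(w';n); in particular Σ_{w'=0}^{n} (-1)^{w'} A_{w'} K_w(w';n) ≥ 0 for all w. -/

import Mathlib

open Finset

/-- An `n`-qubit Pauli operator modulo phase, identified with `(u, v) ∈ (ℤ/2)ⁿ × (ℤ/2)ⁿ`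
(corresponding to `Z^u X^v`). -/
abbrev Pauli (n : ℕ) := (Fin n → ZMod 2) × (Fin n → ZMod 2)

/-- The weight of a Pauli operator: the number of qubits on which it acts nontrivially. -/
def wtP {n : ℕ} (g : Pauli n) : ℕ :=
  (Finset.univ.filter fun i => g.1 i ≠ 0 ∨ g.2 i ≠ 0).card

/-- The symplectic inner product of two Pauli operators. -/
def sip {n : ℕ} (g h : Pauli n) : ZMod 2 :=
  ∑ i, (g.1 i * h.2 i + g.2 i * h.1 i)

/-- Quaternary Krawtchouk polynomial at integer points. -/
noncomputable def kraw (n i x : ℕ) : ℝ :=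
  ∑ j ∈ Finset.range (i + 1),
    (-1 : ℝ) ^ j * 3 ^ (i - j) * (x.choose j) * ((n - x).choose (i - j))

/-!
For `x` of weight `w`, the map `g ↦ ⟨x, g⟩ + wt g` is additive on `S` because
`wt (g + h) ≡ wt g + wt h + ⟨g, h⟩ (mod 2)` and `S` is isotropic; it vanishes identically
exactly when `x` lies in the shadow. Summing the associated `±1`-character over `S` therefore
counts `|S|` times each weight-`w` element of the shadow. Exchanging the two summations leaves,
for each `g ∈ S`, the sign `(-1)^{wt g}` times `∑_{wt x = w} (-1)^{⟨x, g⟩}`, which is the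
coefficient of `z^w` in `∏ᵢ ∑_{a ∈ 𝔽₂²} (-1)^{⟨a, gᵢ⟩} z^{[a ≠ 0]} = (1 - z)^{wt g} (1 + 3z)^{n - wt g}`,
i.e. `K_w(wt g; n)`.
-/

open Polynomial

lemma ZMod.eq_zero_or_eq_one (a : ZMod 2) : a = 0 ∨ a = 1 := by
  revert a
  decide

lemma ZMod.sum_univ_two {M : Type*} [AddCommMonoid M] (f : ZMod 2 → M) :
    ∑ a, f a = f 0 + f 1 :=
  Fin.sum_univ_two f

lemma AddChar.map_sum_eq_prod {ι A M : Type*} [AddCommMonoid A] [CommMonoid M]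
    (ψ : AddChar A M) (s : Finset ι) (f : ι → A) : ψ (∑ i ∈ s, f i) = ∏ i ∈ s, ψ (f i) :=
  map_prod ψ.toMonoidHom (fun i => Multiplicative.ofAdd (f i)) s

lemma Finset.sum_comp_eq_sum_range_card_filter {α M : Type*} [AddCommMonoid M] (s : Finset α)
    (f : α → ℕ) (F : ℕ → M) {n : ℕ} (hf : ∀ a ∈ s, f a ≤ n) :
    ∑ a ∈ s, F (f a) = ∑ k ∈ range (n + 1), #(s.filter (f · = k)) • F k := by
  rw [← sum_fiberwise_of_maps_to (g := f) (t := range (n + 1))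
    (fun a ha => mem_range_succ_iff.mpr (hf a ha))]
  refine sum_congr rfl fun k _ => ?_
  rw [sum_congr rfl fun a ha => congrArg F (mem_filter.mp ha).2, sum_const]

lemma Fintype.sum_prod_pi_prod {ι α β R : Type*} [Fintype ι] [DecidableEq ι] [Fintype α]
    [Fintype β] [CommSemiring R] (f : ι → α → β → R) :
    ∑ x : (ι → α) × (ι → β), ∏ i, f i (x.1 i) (x.2 i) = ∏ i, ∑ a, ∑ b, f i a b := by
  simp_rw [← Fintype.sum_prod_type', Fintype.prod_sum]
  exact Fintype.sum_equiv (Equiv.arrowProdEquivProdArrow ι (fun _ => α) (fun _ => β)).symm _ _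
    fun _ => rfl

lemma Polynomial.coeff_one_add_C_mul_X_pow {R : Type*} [CommSemiring R] (a : R) (m j : ℕ) :
    ((1 + C a * X) ^ m).coeff j = a ^ j * m.choose j := by
  rw [add_comm, add_pow, finsetSum_coeff]
  simp only [one_pow, mul_one, mul_pow, ← C_pow, ← Nat.cast_comm, ← C_eq_natCast, mul_assoc,
    coeff_C_mul, coeff_mul_C, coeff_X_pow, mul_ite, mul_zero, sum_ite_eq, mem_range,
    Nat.lt_succ_iff]
  split_ifs with h
  · ring
  · simp [Nat.choose_eq_zero_of_lt (not_le.mp h)]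

lemma coeff_one_sub_X_pow_mul_one_add_three_X_pow (n k w : ℕ) :
    ((1 - X) ^ k * (1 + C 3 * X) ^ (n - k) : ℝ[X]).coeff w = kraw n w k := by
  rw [sub_eq_add_neg, ← neg_one_mul, ← C_1, ← C_neg, C_1, coeff_mul,
    Nat.sum_antidiagonal_eq_sum_range_succ_mk, kraw]
  refine sum_congr rfl fun j _ => ?_
  rw [coeff_one_add_C_mul_X_pow, coeff_one_add_C_mul_X_pow]
  ring

noncomputable def signChar : AddChar (ZMod 2) ℝ := AddChar.zmodChar 2 (ζ := -1) (by norm_num)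

lemma signChar_natCast (m : ℕ) : signChar m = (-1) ^ m := AddChar.zmodChar_apply' _ m

lemma signChar_one : signChar 1 = -1 := by simpa using signChar_natCast 1

lemma signChar_eq_one_iff (a : ZMod 2) : signChar a = 1 ↔ a = 0 := by
  rcases ZMod.eq_zero_or_eq_one a with rfl | rfl <;> norm_num [signChar_one]

lemma sum_signChar_mul_X_pow (u v : ZMod 2) :
    ∑ a : ZMod 2, ∑ b : ZMod 2,
        C (signChar (a * v + b * u)) * X ^ (if a ≠ 0 ∨ b ≠ 0 then 1 else 0) =
      if u ≠ 0 ∨ v ≠ 0 then 1 - X else 1 + C 3 * X := by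
  rcases ZMod.eq_zero_or_eq_one u with rfl | rfl <;>
    rcases ZMod.eq_zero_or_eq_one v with rfl | rfl <;>
    simp [ZMod.sum_univ_two, signChar_one, map_ofNat C 3, show (1 + 1 : ZMod 2) = 0 from rfl] <;>
    ring

section Pauli

variable {n : ℕ}

lemma wtP_le (g : Pauli n) : wtP g ≤ n :=
  (card_filter_le _ _).trans (card_fin n).le

lemma wtP_cast (g : Pauli n) :
    (wtP g : ZMod 2) = ∑ i, if g.1 i ≠ 0 ∨ g.2 i ≠ 0 then 1 else 0 := by
  rw [wtP, card_filter]
  push_cast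
  rfl

lemma wtP_add_cast (g h : Pauli n) : (wtP (g + h) : ZMod 2) = wtP g + wtP h + sip g h := by
  have key : ∀ a b c d : ZMod 2,
      (if a + c ≠ 0 ∨ b + d ≠ 0 then 1 else 0 : ZMod 2) =
        (if a ≠ 0 ∨ b ≠ 0 then 1 else 0) + (if c ≠ 0 ∨ d ≠ 0 then 1 else 0) + (a * d + b * c) := by
    decide
  simp only [wtP_cast, sip, ← sum_add_distrib]
  exact sum_congr rfl fun i _ => key _ _ _ _

lemma sip_add_right (x g h : Pauli n) : sip x (g + h) = sip x g + sip x h := by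
  simp only [sip, Prod.fst_add, Prod.snd_add, Pi.add_apply, ← sum_add_distrib]
  exact sum_congr rfl fun i _ => by ring

lemma C_signChar_sip_mul_X_pow_wtP (x y : Pauli n) :
    C (signChar (sip x y)) * X ^ wtP x =
      ∏ i, C (signChar (x.1 i * y.2 i + x.2 i * y.1 i)) *
        X ^ (if x.1 i ≠ 0 ∨ x.2 i ≠ 0 then 1 else 0) := by
  rw [prod_mul_distrib, sip, AddChar.map_sum_eq_prod, map_prod, wtP, card_filter,
    prod_pow_eq_pow_sum]

lemma sum_C_signChar_sip_mul_X_pow_wtP (y : Pauli n) :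
    ∑ x : Pauli n, C (signChar (sip x y)) * X ^ wtP x =
      (1 - X) ^ wtP y * (1 + C 3 * X) ^ (n - wtP y) := by
  simp_rw [C_signChar_sip_mul_X_pow_wtP]
  rw [Fintype.sum_prod_pi_prod (fun i a b => C (signChar (a * y.2 i + b * y.1 i)) *
    X ^ (if a ≠ 0 ∨ b ≠ 0 then 1 else 0))]
  simp_rw [sum_signChar_mul_X_pow, prod_ite, prod_const]
  have hcompl : #(univ.filter fun i => ¬(y.1 i ≠ 0 ∨ y.2 i ≠ 0)) = n - wtP y := by
    have hcard := card_filter_add_card_filter_not (s := univ) (fun i => y.1 i ≠ 0 ∨ y.2 i ≠ 0)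
    rw [card_univ, Fintype.card_fin] at hcard
    rw [wtP]
    omega
  rw [hcompl]
  rfl

lemma sum_signChar_sip_of_wtP_eq (y : Pauli n) (w : ℕ) :
    ∑ x ∈ univ.filter (wtP · = w), signChar (sip x y) = kraw n w (wtP y) := by
  rw [← coeff_one_sub_X_pow_mul_one_add_three_X_pow, ← sum_C_signChar_sip_mul_X_pow_wtP,
    finsetSum_coeff, sum_filter]
  simp_rw [coeff_C_mul_X_pow, eq_comm]

def shadowForm (S : AddSubgroup (Pauli n)) (hiso : ∀ g ∈ S, ∀ h ∈ S, sip g h = 0)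
    (x : Pauli n) : S →+ ZMod 2 where
  toFun g := sip x g + wtP (g : Pauli n)
  map_zero' := by simp [sip, wtP]
  map_add' g h := by
    rw [AddSubgroup.coe_add, sip_add_right, wtP_add_cast, hiso g g.2 h h.2]
    ring

lemma sum_signChar_sip_add_wtP {S : AddSubgroup (Pauli n)}
    (hiso : ∀ g ∈ S, ∀ h ∈ S, sip g h = 0) (x : Pauli n) [DecidablePred (· ∈ S)]
    [Decidable (∀ g ∈ S, sip x g = wtP g)] :
    ∑ g ∈ univ.filter (· ∈ S), signChar (sip x g + wtP g) =
      if ∀ g ∈ S, sip x g = wtP g then (Nat.card S : ℝ) else 0 := by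
  have htriv :
      signChar.compAddMonoidHom (shadowForm S hiso x) = 0 ↔ ∀ g ∈ S, sip x g = wtP g := by
    simp [AddChar.eq_zero_iff, shadowForm, signChar_eq_one_iff, CharTwo.add_eq_zero]
  rw [sum_subtype _ (fun _ => mem_filter_univ _), Nat.card_eq_fintype_card]
  classical
  convert (signChar.compAddMonoidHom (shadowForm S hiso x)).sum_eq_ite using 2
  · rfl
  · exact htriv.symm

theorem card_mul_ncard_shadow_eq (S : AddSubgroup (Pauli n))
    (hiso : ∀ g ∈ S, ∀ h ∈ S, sip g h = 0) (w : ℕ) :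
    (Nat.card S : ℝ) * {x | (∀ g ∈ S, sip x g = (wtP g : ZMod 2)) ∧ wtP x = w}.ncard =
      ∑ w' ∈ range (n + 1),
        (-1 : ℝ) ^ w' * ({x | x ∈ S ∧ wtP x = w'}.ncard : ℝ) * kraw n w w' := by
  classical
  simp only [Set.ncard_eq_toFinset_card', Set.toFinset_ofPred]
  calc (Nat.card S : ℝ) * #(univ.filter fun x => (∀ g ∈ S, sip x g = wtP g) ∧ wtP x = w)
      = ∑ x ∈ univ.filter (wtP · = w), ∑ g ∈ univ.filter (· ∈ S),
          signChar (sip x g + wtP g) := by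
        simp_rw [sum_signChar_sip_add_wtP hiso, sum_ite, sum_const_zero, add_zero, sum_const,
          filter_filter, nsmul_eq_mul, and_comm, mul_comm]
    _ = ∑ g ∈ univ.filter (· ∈ S), (-1 : ℝ) ^ wtP g * kraw n w (wtP g) := by
        rw [sum_comm]
        simp_rw [AddChar.map_add_eq_mul, signChar_natCast, ← sum_mul, sum_signChar_sip_of_wtP_eq,
          mul_comm]
    _ = _ := by
        rw [sum_comp_eq_sum_range_card_filter _ wtP (fun k => (-1 : ℝ) ^ k * kraw n w k)
          (fun g _ => wtP_le g)]
        simp_rw [filter_filter, nsmul_eq_mul]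
        exact sum_congr rfl fun _ _ => by ring

end Pauli

theorem shadow_enumerator_general {n : ℕ} (S : AddSubgroup (Pauli n))
    (hiso : ∀ g ∈ S, ∀ h ∈ S, sip g h = 0) (w : ℕ) :
    ({x | (∀ g ∈ S, sip x g = (wtP g : ZMod 2)) ∧ wtP x = w}.ncard : ℝ) =
      (1 / (Nat.card S : ℝ)) *
        ∑ w' ∈ Finset.range (n + 1),
          (-1 : ℝ) ^ w' * ({x | x ∈ S ∧ wtP x = w'}.ncard : ℝ) * kraw n w w' ∧
    0 ≤ ∑ w' ∈ Finset.range (n + 1),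
          (-1 : ℝ) ^ w' * ({x | x ∈ S ∧ wtP x = w'}.ncard : ℝ) * kraw n w w' := by
  have hS : (0 : ℝ) < Nat.card S := Nat.cast_pos.mpr Nat.card_pos
  rw [← card_mul_ncard_shadow_eq S hiso w]
  exact ⟨by field_simp, by positivity⟩

/-- Rains' shadow enumerator identity: the weight enumerator of the shadow
`Sh(S) = {E : ⟨E,g⟩ ≡ wt(g) (mod 2) ∀ g ∈ S}` of an isotropic subgroup `S` is given by
the signed MacWilliams transform of the weight distribution of `S`; in particular the
transform is nonnegative. -/
theorem shadow_enumerator {n : ℕ} (S : AddSubgroup (Pauli n))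
    (hiso : ∀ g ∈ S, ∀ h ∈ S, sip g h = 0) (w : ℕ) (hw : w ≤ n) :
    ({x | (∀ g ∈ S, sip x g = (wtP g : ZMod 2)) ∧ wtP x = w}.ncard : ℝ) =
      (1 / (Nat.card S : ℝ)) *
        ∑ w' ∈ Finset.range (n + 1),
          (-1 : ℝ) ^ w' * ({x | x ∈ S ∧ wtP x = w'}.ncard : ℝ) * kraw n w w' ∧
    0 ≤ ∑ w' ∈ Finset.range (n + 1),
          (-1 : ℝ) ^ w' * ({x | x ∈ S ∧ wtP x = w'}.ncard : ℝ) * kraw n w w' :=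
  shadow_enumerator_general S hiso w
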